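/- Let G = Pₙ be the path on n+1 vertices with endpoints u and v, and consider Bernoulli bond percolation on the bunkbed graph G± with every edge open with probability 1 − q. Then P(u₋ ↔ v₋) − P(u₋ ↔ v₊) = q^{n+1}(1 − q)^n for all q ∈ [0,1]. -/

import Mathlib

open SimpleGraph Finset
open scoped Classical

variable {V : Type*}

/-- The bunkbed graph `G □ K₂`: vertex `(x, false)` is `x₋`, vertex `(x, true)` is `x₊`. -/
def bunkbed (G : SimpleGraph V) : SimpleGraph (V × Bool) where
  Adj a b := (a.2 = b.2 ∧ G.Adj a.1 b.1) ∨ (a.1 = b.1 ∧ a.2 ≠ b.2)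
  symm := ⟨by
    rintro ⟨x, s⟩ ⟨y, t⟩ (⟨h1, h2⟩ | ⟨h1, h2⟩)
    · exact Or.inl ⟨h1.symm, h2.symm⟩
    · exact Or.inr ⟨h1.symm, Ne.symm h2⟩⟩
  loopless := ⟨by
    rintro ⟨x, s⟩ (⟨_, h⟩ | ⟨_, h⟩)
    · exact G.irrefl h
    · exact h rfl⟩

/-- `supp A = {x : h_x(A) = 1}`, i.e. exactly one of `x₋, x₊` lies in `A`. -/
def supp (A : Set (V × Bool)) : Set V := {x | Xor' ((x, false) ∈ A) ((x, true) ∈ A)}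

/-- Edge boundary of a vertex set in a graph. -/
def bdry {W : Type*} (H : SimpleGraph W) (A : Set W) : Set (Sym2 W) :=
  {e | e ∈ H.edgeSet ∧ ∃ x y, e = s(x, y) ∧ x ∈ A ∧ y ∉ A}

/-- The induced restriction of `G` to a vertex set `S`, as a graph on `V`. -/
def within (G : SimpleGraph V) (S : Set V) : SimpleGraph V where
  Adj a b := G.Adj a b ∧ a ∈ S ∧ b ∈ S
  symm := ⟨fun _ _ ⟨h, ha, hb⟩ => ⟨h.symm, hb, ha⟩⟩
  loopless := ⟨fun a ⟨h, _⟩ => G.irrefl h⟩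

/-- Probability of an event `Q` (a predicate on the set of open edges) under independent
bond percolation on `H` where edge `e` is open with probability `p e`. -/
noncomputable def prEvent {W : Type*} [Fintype W] (H : SimpleGraph W)
    (p : Sym2 W → ℝ) (Q : Finset (Sym2 W) → Prop) : ℝ :=
  ∑ ω ∈ H.edgeFinset.powerset,
    if Q ω then ∏ e ∈ H.edgeFinset, (if e ∈ ω then p e else 1 - p e) else 0

/-- The two-point function: probability that `a` and `b` are joined by a path of open edges. -/
noncomputable def prConn {W : Type*} [Fintype W] (H : SimpleGraph W)
    (p : Sym2 W → ℝ) (a b : W) : ℝ :=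
  prEvent H p fun ω => (SimpleGraph.fromEdgeSet (↑ω : Set (Sym2 W))).Reachable a b

/-!
Split according to whether some rung is open. If one is, let `S` be the set of columns at or to
the right of the leftmost open rung. Swapping the two levels of every edge over `S` is a
size-preserving involution of configurations, hence preserves the measure, and it exchanges
open paths `u₋ → v₋` with open paths `u₋ → v₊`: a path can only enter `S` through a column whose
rung is open, where it may switch levels. So those two contributions cancel. If no rung is open,
`u₋` never reaches `v₊`, and it reaches `v₋` exactly when all `n` bottom edges are open, an event
of probability `q^(n+1) (1-q)^n`.
-/

lemma Finset.prod_ite_mem_of_subset {α M : Type*} [CommMonoid M] [DecidableEq α]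
    {s t : Finset α} (ht : t ⊆ s) (f g : α → M) :
    ∏ x ∈ s, (if x ∈ t then f x else g x) = (∏ x ∈ t, f x) * ∏ x ∈ s \ t, g x := by
  have h := prod_piecewise s t f g
  rwa [inter_eq_right.2 ht] at h

section Percolation

variable {W : Type*} [Fintype W] {H : SimpleGraph W} {p : Sym2 W → ℝ}
  {Q Q' : Finset (Sym2 W) → Prop}

lemma prEvent_congr (h : ∀ ω ⊆ H.edgeFinset, Q ω ↔ Q' ω) : prEvent H p Q = prEvent H p Q' :=
  sum_congr rfl fun ω hω => if_congr (h ω (mem_powerset.1 hω)) rfl rfl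

lemma prEvent_eq_zero (h : ∀ ω ⊆ H.edgeFinset, ¬Q ω) : prEvent H p Q = 0 :=
  sum_eq_zero fun ω hω => if_neg (h ω (mem_powerset.1 hω))

lemma prEvent_eq_and_add_and_not (R : Finset (Sym2 W) → Prop) :
    prEvent H p Q = prEvent H p (fun ω => Q ω ∧ R ω) + prEvent H p (fun ω => Q ω ∧ ¬R ω) := by
  simp only [prEvent, ← sum_add_distrib]
  refine sum_congr rfl fun ω _ => ?_
  by_cases hQ : Q ω <;> by_cases hR : R ω <;> simp [hQ, hR]

/-- With a constant edge probability the weight of a configuration depends only on its size. -/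
lemma prEvent_const_eq_of_involutive (a : ℝ) (Φ : Finset (Sym2 W) → Finset (Sym2 W))
    (hΦ : ∀ ω ⊆ H.edgeFinset, Φ ω ⊆ H.edgeFinset) (hΦΦ : ∀ ω, Φ (Φ ω) = ω)
    (hcard : ∀ ω, #(Φ ω) = #ω) (hQ : ∀ ω ⊆ H.edgeFinset, Q ω ↔ Q' (Φ ω)) :
    prEvent H (fun _ => a) Q = prEvent H (fun _ => a) Q' := by
  have weight {ω} (hω : ω ⊆ H.edgeFinset) :
      ∏ e ∈ H.edgeFinset, (if e ∈ ω then a else 1 - a) =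
        a ^ #ω * (1 - a) ^ (#H.edgeFinset - #ω) := by
    rw [prod_ite_mem_of_subset hω, prod_const, prod_const, card_sdiff_of_subset hω]
  refine sum_nbij' Φ Φ (fun ω hω => ?_) (fun ω hω => ?_) (fun ω _ => hΦΦ ω)
    (fun ω _ => hΦΦ ω) (fun ω hω => ?_)
  · exact mem_powerset.2 (hΦ ω (mem_powerset.1 hω))
  · exact mem_powerset.2 (hΦ ω (mem_powerset.1 hω))
  · have hω' := mem_powerset.1 hω
    rw [weight hω', weight (hΦ ω hω'), hcard]
    exact if_congr (hQ ω hω') rfl rfl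

lemma prEvent_disjoint_and_subset {R B : Finset (Sym2 W)} (hR : R ⊆ H.edgeFinset)
    (hB : B ⊆ H.edgeFinset) (hRB : Disjoint R B) :
    prEvent H p (fun ω => Disjoint R ω ∧ B ⊆ ω) = (∏ e ∈ B, p e) * ∏ e ∈ R, (1 - p e) := by
  set E := H.edgeFinset
  -- `f e + g e` is `p e` on `B`, `1 - p e` on `R` and `1` elsewhere
  set f : Sym2 W → ℝ := fun e => if e ∈ R then 0 else p e
  set g : Sym2 W → ℝ := fun e => if e ∈ B then 0 else 1 - p e
  have hterm {ω} (hω : ω ⊆ E) : (if Disjoint R ω ∧ B ⊆ ω then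
      ∏ e ∈ E, (if e ∈ ω then p e else 1 - p e) else 0) = (∏ e ∈ ω, f e) * ∏ e ∈ E \ ω, g e := by
    rw [← prod_ite_mem_of_subset hω]
    split_ifs with h
    · refine prod_congr rfl fun e _ => ?_
      by_cases he : e ∈ ω
      · simp [f, he, disjoint_right.1 h.1 he]
      · simp [g, he, show e ∉ B from fun hB => he (h.2 hB)]
    · rw [not_and_or, not_disjoint_iff, not_subset] at h
      rcases h with ⟨e, heR, heω⟩ | ⟨e, heB, heω⟩
      · exact (prod_eq_zero (hR heR) (by simp [f, heR, heω])).symm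
      · exact (prod_eq_zero (hB heB) (by simp [g, heB, heω])).symm
  calc prEvent H p (fun ω => Disjoint R ω ∧ B ⊆ ω)
      = ∑ ω ∈ E.powerset, (∏ e ∈ ω, f e) * ∏ e ∈ E \ ω, g e :=
        sum_congr rfl fun ω hω => by convert hterm (mem_powerset.1 hω)
    _ = ∏ e ∈ E, (f e + g e) := (prod_add f g E).symm
    _ = ∏ e ∈ E, (if e ∈ B then p e else if e ∈ R then 1 - p e else 1) := by
        refine prod_congr rfl fun e _ => ?_
        by_cases heB : e ∈ B
        · simp [f, g, heB, disjoint_right.1 hRB heB]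
        · by_cases heR : e ∈ R <;> simp [f, g, heB, heR]
    _ = (∏ e ∈ B, p e) * ∏ e ∈ R, (1 - p e) := by
        rw [prod_ite_mem_of_subset hB, prod_ite_mem, inter_eq_right.2 (subset_sdiff.2 ⟨hR, hRB⟩)]

end Percolation

lemma SimpleGraph.Reachable.mem_of_adj_mem {W : Type*} {H : SimpleGraph W} {A : Set W}
    (hA : ∀ x y, H.Adj x y → x ∈ A → y ∈ A) {a b : W} (h : H.Reachable a b) (ha : a ∈ A) :
    b ∈ A := by
  obtain ⟨w⟩ := h
  induction w with
  | nil => exact ha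
  | cons hxy _ ih => exact ih (hA _ _ hxy ha)

namespace Bunkbed

noncomputable section

abbrev openGraph {W : Type*} (ω : Finset (Sym2 W)) : SimpleGraph W := fromEdgeSet ↑ω

def rung (k : V) : Sym2 (V × Bool) := s((k, false), (k, true))

def swapLevel (x : V × Bool) : V × Bool := (x.1, !x.2)

section Flip

variable {G : SimpleGraph V} {S : Set V} {ω : Finset (Sym2 (V × Bool))}

lemma rung_injective : Function.Injective (rung : V → Sym2 (V × Bool)) := by
  intro a b h
  simpa [rung] using h

@[simp] lemma swapLevel_swapLevel (x : V × Bool) : swapLevel (swapLevel x) = x := by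
  simp [swapLevel]

lemma bunkbed_adj_swapLevel {x y : V × Bool} :
    (bunkbed G).Adj (swapLevel x) (swapLevel y) ↔ (bunkbed G).Adj x y := by
  simp [bunkbed, swapLevel]

lemma rung_mem_edgeSet (k : V) : rung k ∈ (bunkbed G).edgeSet :=
  Or.inr ⟨rfl, Bool.false_ne_true⟩

lemma mk_eq_rung {x y : V × Bool} (h1 : x.1 = y.1) (h2 : x.2 ≠ y.2) : s(x, y) = rung x.1 := by
  obtain ⟨a, s⟩ := x
  obtain ⟨b, t⟩ := y
  cases s <;> cases t <;> simp_all [rung, Sym2.eq_swap]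

lemma map_swapLevel_rung (k : V) : (rung k).map swapLevel = rung k := by
  simp [rung, swapLevel, Sym2.eq_swap]

lemma reachable_swapLevel {x : V × Bool} (h : rung x.1 ∈ ω) :
    (openGraph ω).Reachable x (swapLevel x) := by
  refine Adj.reachable ((fromEdgeSet_adj _).2 ⟨?_, ?_⟩)
  · rwa [Finset.mem_coe, mk_eq_rung (x := x) (y := swapLevel x) rfl (by simp [swapLevel])]
  · simp [swapLevel, Prod.ext_iff]

def flipEdge (S : Set V) (e : Sym2 (V × Bool)) : Sym2 (V × Bool) :=
  if ∀ x ∈ e, x.1 ∈ S then e.map swapLevel else e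

lemma flipEdge_flipEdge (e : Sym2 (V × Bool)) : flipEdge S (flipEdge S e) = e := by
  by_cases h : ∀ x ∈ e, x.1 ∈ S
  · have h' : ∀ x ∈ e.map swapLevel, x.1 ∈ S := by
      intro x hx
      obtain ⟨y, hy, rfl⟩ := Sym2.mem_map.1 hx
      exact h y hy
    rw [show flipEdge S e = e.map swapLevel from if_pos h, flipEdge, if_pos h', Sym2.map_map]
    simp
  · rw [show flipEdge S e = e from if_neg h, flipEdge, if_neg h]

lemma flipEdge_mem_edgeSet {e : Sym2 (V × Bool)} (he : e ∈ (bunkbed G).edgeSet) :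
    flipEdge S e ∈ (bunkbed G).edgeSet := by
  unfold flipEdge
  split_ifs
  · induction e using Sym2.ind with
    | _ x y => simpa [bunkbed_adj_swapLevel] using he
  · exact he

lemma flipEdge_rung (k : V) : flipEdge S (rung k) = rung k := by
  unfold flipEdge
  split_ifs
  · exact map_swapLevel_rung k
  · rfl

def flipOpen (S : Set V) (ω : Finset (Sym2 (V × Bool))) : Finset (Sym2 (V × Bool)) :=
  ω.image (flipEdge S)

lemma mem_flipOpen {e : Sym2 (V × Bool)} : e ∈ flipOpen S ω ↔ flipEdge S e ∈ ω := by
  refine ⟨?_, fun h => mem_image.2 ⟨_, h, flipEdge_flipEdge e⟩⟩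
  intro h
  obtain ⟨e', he', rfl⟩ := mem_image.1 h
  rwa [flipEdge_flipEdge]

lemma flipOpen_flipOpen : flipOpen S (flipOpen S ω) = ω := by
  ext e
  rw [mem_flipOpen, mem_flipOpen, flipEdge_flipEdge]

lemma card_flipOpen : #(flipOpen S ω) = #ω :=
  card_image_of_injective _ (Function.LeftInverse.injective flipEdge_flipEdge)

lemma flipOpen_subset (hω : (ω : Set (Sym2 (V × Bool))) ⊆ (bunkbed G).edgeSet) :
    (flipOpen S ω : Set (Sym2 (V × Bool))) ⊆ (bunkbed G).edgeSet := by
  intro e he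
  simpa [flipEdge_flipEdge] using flipEdge_mem_edgeSet (S := S) (hω (mem_flipOpen.1 he))

lemma rung_mem_flipOpen {k : V} : rung k ∈ flipOpen S ω ↔ rung k ∈ ω := by
  rw [mem_flipOpen, flipEdge_rung]

def flipVert (S : Set V) (ω : Finset (Sym2 (V × Bool))) (x : V × Bool) : V × Bool :=
  if x.1 ∈ S ∧ rung x.1 ∉ ω then swapLevel x else x

lemma flipVert_of_rung_mem {x : V × Bool} (h : x.1 ∈ S → rung x.1 ∈ ω) : flipVert S ω x = x :=
  if_neg fun h' => h'.2 (h h'.1)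

lemma reachable_flipVert_swapLevel {x : V × Bool} (hx : x.1 ∈ S) :
    (openGraph (flipOpen S ω)).Reachable (flipVert S ω x) (swapLevel x) := by
  by_cases hr : rung x.1 ∈ ω
  · rw [flipVert_of_rung_mem fun _ => hr]
    exact reachable_swapLevel (rung_mem_flipOpen.2 hr)
  · rw [flipVert, if_pos ⟨hx, hr⟩]

lemma snd_eq_of_reachable (hω : (ω : Set (Sym2 (V × Bool))) ⊆ (bunkbed G).edgeSet)
    (hr : ∀ k, rung k ∉ ω) {a b : V × Bool} (h : (openGraph ω).Reachable a b) : a.2 = b.2 := by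
  refine (h.mem_of_adj_mem (A := {x : V × Bool | x.2 = a.2}) (fun x y hxy hx => ?_) rfl).symm
  obtain ⟨hmem, -⟩ := (fromEdgeSet_adj _).1 hxy
  rcases hω hmem with ⟨hxy2, -⟩ | ⟨h1, h2⟩
  · exact hxy2.symm.trans hx
  · exact absurd (mk_eq_rung h1 h2 ▸ hmem) (hr _)

section Cut

variable (hω : (ω : Set (Sym2 (V × Bool))) ⊆ (bunkbed G).edgeSet)
  (hcut : ∀ x y, G.Adj x y → x ∈ S → y ∉ S → rung x ∈ ω)
include hω hcut

lemma adj_flipVert_of_mem_of_notMem {x y : V × Bool} (hxy : (openGraph ω).Adj x y)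
    (hx : x.1 ∈ S) (hy : y.1 ∉ S) :
    (openGraph (flipOpen S ω)).Adj (flipVert S ω x) (flipVert S ω y) := by
  obtain ⟨hmem, hne⟩ := (fromEdgeSet_adj _).1 hxy
  have hG : G.Adj x.1 y.1 := by
    rcases hω hmem with ⟨-, h⟩ | ⟨h, -⟩
    · exact h
    · exact absurd (h ▸ hx) hy
  rw [flipVert_of_rung_mem fun _ => hcut _ _ hG hx hy, flipVert_of_rung_mem fun h => absurd h hy]
  refine (fromEdgeSet_adj _).2 ⟨?_, hne⟩
  rw [mem_coe, mem_flipOpen, flipEdge, if_neg fun h => hy (h y (Sym2.mem_mk_right x y))]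
  exact hmem

/-- An edge over `S` is flipped along with its endpoints; an edge leaving `S` does so at a column
whose open rung lets a path switch levels. -/
lemma reachable_flipVert_of_adj {x y : V × Bool} (hxy : (openGraph ω).Adj x y) :
    (openGraph (flipOpen S ω)).Reachable (flipVert S ω x) (flipVert S ω y) := by
  obtain ⟨hmem, hne⟩ := (fromEdgeSet_adj _).1 hxy
  by_cases hx : x.1 ∈ S <;> by_cases hy : y.1 ∈ S
  · have hswap : (openGraph (flipOpen S ω)).Adj (swapLevel x) (swapLevel y) := by
      refine (fromEdgeSet_adj _).2 ⟨?_, fun h => hne (by simpa using congrArg swapLevel h)⟩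
      have hS : ∀ z ∈ s(swapLevel x, swapLevel y), z.1 ∈ S := by
        rintro z hz
        rcases Sym2.mem_iff.1 hz with rfl | rfl
        exacts [hx, hy]
      rw [mem_coe, mem_flipOpen, flipEdge, if_pos hS, Sym2.map_mk, swapLevel_swapLevel,
        swapLevel_swapLevel]
      exact hmem
    exact (reachable_flipVert_swapLevel hx).trans
      (hswap.reachable.trans (reachable_flipVert_swapLevel hy).symm)
  · exact (adj_flipVert_of_mem_of_notMem hω hcut hxy hx hy).reachable
  · exact (adj_flipVert_of_mem_of_notMem hω hcut hxy.symm hy hx).symm.reachable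
  · rw [flipVert_of_rung_mem fun h => absurd h hx, flipVert_of_rung_mem fun h => absurd h hy]
    refine Adj.reachable ((fromEdgeSet_adj _).2 ⟨?_, hne⟩)
    rw [mem_coe, mem_flipOpen, flipEdge, if_neg fun h => hx (h x (Sym2.mem_mk_left x y))]
    exact hmem

lemma reachable_flipVert {a b : V × Bool} (h : (openGraph ω).Reachable a b) :
    (openGraph (flipOpen S ω)).Reachable (flipVert S ω a) (flipVert S ω b) := by
  rw [reachable_iff_reflTransGen] at h ⊢
  exact Relation.ReflTransGen.lift' (flipVert S ω)
    (fun x y hxy => (reachable_iff_reflTransGen _ _).1 (reachable_flipVert_of_adj hω hcut hxy))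
    _ _ h

theorem reachable_flipOpen_swapLevel {a b : V × Bool} (ha : a.1 ∈ S → rung a.1 ∈ ω)
    (hb : b.1 ∈ S) (h : (openGraph ω).Reachable a b) :
    (openGraph (flipOpen S ω)).Reachable a (swapLevel b) := by
  have h' := reachable_flipVert hω hcut h
  rw [flipVert_of_rung_mem ha] at h'
  exact h'.trans (reachable_flipVert_swapLevel hb)

end Cut

end Flip

section Path

variable {n : ℕ} {ω : Finset (Sym2 (Fin (n + 1) × Bool))}

def rightOfRung (ω : Finset (Sym2 (Fin (n + 1) × Bool))) : Set (Fin (n + 1)) :=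
  {x | ∃ k ≤ x, rung k ∈ ω}

lemma rung_mem_of_adj_rightOfRung {x y : Fin (n + 1)} (hxy : (pathGraph (n + 1)).Adj x y)
    (hx : x ∈ rightOfRung ω) (hy : y ∉ rightOfRung ω) : rung x ∈ ω := by
  obtain ⟨k, hkx, hk⟩ := hx
  obtain rfl | hlt := hkx.eq_or_lt
  · exact hk
  · refine absurd ⟨k, ?_, hk⟩ hy
    rw [pathGraph_adj] at hxy
    rw [Fin.le_def]
    rw [Fin.lt_def] at hlt
    omega

lemma rightOfRung_flipOpen {S : Set (Fin (n + 1))} :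
    rightOfRung (flipOpen S ω) = rightOfRung ω := by
  simp only [rightOfRung, rung_mem_flipOpen]

def flipRight (ω : Finset (Sym2 (Fin (n + 1) × Bool))) : Finset (Sym2 (Fin (n + 1) × Bool)) :=
  flipOpen (rightOfRung ω) ω

lemma flipRight_flipRight (ω : Finset (Sym2 (Fin (n + 1) × Bool))) :
    flipRight (flipRight ω) = ω := by
  rw [flipRight, flipRight, rightOfRung_flipOpen, flipOpen_flipOpen]

lemma reachable_flipRight
    (hω : (ω : Set (Sym2 (Fin (n + 1) × Bool))) ⊆ (bunkbed (pathGraph (n + 1))).edgeSet)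
    (hr : ∃ k, rung k ∈ ω) {b : Bool} (h : (openGraph ω).Reachable (0, false) (Fin.last n, b)) :
    (openGraph (flipRight ω)).Reachable (0, false) (Fin.last n, !b) := by
  refine reachable_flipOpen_swapLevel hω (fun _ _ => rung_mem_of_adj_rightOfRung) ?_ ?_ h
  · rintro ⟨k, hk0, hk⟩
    rwa [Fin.le_zero_iff.1 hk0] at hk
  · obtain ⟨k, hk⟩ := hr
    exact ⟨k, Fin.le_last k, hk⟩

lemma exists_rung_mem_flipRight : (∃ k, rung k ∈ flipRight ω) ↔ ∃ k, rung k ∈ ω := by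
  simp only [flipRight, rung_mem_flipOpen]

lemma reachable_last_iff_flipRight
    (hω : (ω : Set (Sym2 (Fin (n + 1) × Bool))) ⊆ (bunkbed (pathGraph (n + 1))).edgeSet)
    (hr : ∃ k, rung k ∈ ω) :
    (openGraph ω).Reachable (0, false) (Fin.last n, false) ↔
      (openGraph (flipRight ω)).Reachable (0, false) (Fin.last n, true) := by
  refine ⟨reachable_flipRight hω hr, fun h => ?_⟩
  have h' := reachable_flipRight (ω := flipRight ω) (flipOpen_subset hω)
    (exists_rung_mem_flipRight.2 hr) h
  rwa [flipRight_flipRight] at h'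

def botEdge (j : Fin n) : Sym2 (Fin (n + 1) × Bool) := s((j.castSucc, false), (j.succ, false))

lemma botEdge_injective : Function.Injective (botEdge (n := n)) := by
  intro i j h
  simp only [botEdge, Sym2.eq_iff, Prod.ext_iff, Fin.ext_iff, Fin.val_castSucc, Fin.val_succ] at h
  exact Fin.ext (by omega)

lemma botEdge_mem_edgeSet (j : Fin n) : botEdge j ∈ (bunkbed (pathGraph (n + 1))).edgeSet :=
  Or.inl ⟨rfl, by simp [pathGraph_adj]⟩

lemma rung_ne_botEdge (k : Fin (n + 1)) (j : Fin n) : rung k ≠ botEdge j := by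
  simp [rung, botEdge]

lemma reachable_last_of_botEdge_mem (h : ∀ j, botEdge j ∈ ω) :
    (openGraph ω).Reachable (0, false) (Fin.last n, false) := by
  refine Fin.induction (motive := fun k => (openGraph ω).Reachable (0, false) (k, false))
    .rfl (fun j hj => hj.trans (Adj.reachable ((fromEdgeSet_adj _).2 ⟨h j, ?_⟩))) _
  simp [Prod.ext_iff, Fin.ext_iff]

lemma botEdge_mem_of_reachable_last
    (hω : (ω : Set (Sym2 (Fin (n + 1) × Bool))) ⊆ (bunkbed (pathGraph (n + 1))).edgeSet)
    (hr : ∀ k, rung k ∉ ω) (h : (openGraph ω).Reachable (0, false) (Fin.last n, false))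
    (j : Fin n) : botEdge j ∈ ω := by
  by_contra hj
  have hlast := h.mem_of_adj_mem (A := {x | x.2 = false ∧ x.1 ≤ j.castSucc}) ?_
    ⟨rfl, Fin.zero_le _⟩
  · have := hlast.2
    rw [Fin.le_def, Fin.val_last, Fin.val_castSucc] at this
    omega
  · rintro ⟨x, s⟩ ⟨y, t⟩ hxy ⟨hs, hx⟩
    obtain ⟨hmem, -⟩ := (fromEdgeSet_adj _).1 hxy
    rcases hω hmem with ⟨hst, hG⟩ | ⟨h1, h2⟩
    · simp only at hs hst hx hG ⊢
      subst hs hst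
      refine ⟨rfl, ?_⟩
      change y ≤ j.castSucc
      by_contra hy
      rw [pathGraph_adj] at hG
      rw [Fin.le_def, Fin.val_castSucc] at hx hy
      have hxj : x = j.castSucc := Fin.ext (by rw [Fin.val_castSucc]; omega)
      have hyj : y = j.succ := Fin.ext (by rw [Fin.val_succ]; omega)
      subst hxj hyj
      exact hj hmem
    · exact absurd (mk_eq_rung h1 h2 ▸ hmem) (hr _)

lemma prEvent_reachable_last_and_exists_rung (a : ℝ) :
    prEvent (bunkbed (pathGraph (n + 1))) (fun _ => a)
        (fun ω => (openGraph ω).Reachable (0, false) (Fin.last n, false) ∧ ∃ k, rung k ∈ ω) =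
      prEvent (bunkbed (pathGraph (n + 1))) (fun _ => a)
        (fun ω => (openGraph ω).Reachable (0, false) (Fin.last n, true) ∧ ∃ k, rung k ∈ ω) := by
  refine prEvent_const_eq_of_involutive a flipRight (fun ω hω => ?_) flipRight_flipRight
    (fun _ => card_flipOpen) (fun ω hω => ?_)
  · intro e he
    exact mem_edgeFinset.2 (flipOpen_subset (fun _ he => mem_edgeFinset.1 (hω he)) he)
  · rw [exists_rung_mem_flipRight]
    exact and_congr_left (reachable_last_iff_flipRight fun _ he => mem_edgeFinset.1 (hω he))

lemma prEvent_reachable_last_true_and_not_exists_rung (a : ℝ) :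
    prEvent (bunkbed (pathGraph (n + 1))) (fun _ => a)
      (fun ω => (openGraph ω).Reachable (0, false) (Fin.last n, true) ∧ ¬∃ k, rung k ∈ ω) = 0 :=
  prEvent_eq_zero fun _ hω ⟨h, hr⟩ => Bool.false_ne_true
    (snd_eq_of_reachable (fun _ he => mem_edgeFinset.1 (hω he)) (not_exists.1 hr) h)

lemma prEvent_reachable_last_false_and_not_exists_rung (q : ℝ) :
    prEvent (bunkbed (pathGraph (n + 1))) (fun _ => 1 - q)
      (fun ω => (openGraph ω).Reachable (0, false) (Fin.last n, false) ∧ ¬∃ k, rung k ∈ ω) =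
      q ^ (n + 1) * (1 - q) ^ n := by
  rw [prEvent_congr (Q' := fun ω => Disjoint (univ.image rung) ω ∧ univ.image botEdge ⊆ ω),
    prEvent_disjoint_and_subset]
  · simp [card_image_of_injective _ rung_injective, card_image_of_injective _ botEdge_injective]
    ring
  · exact image_subset_iff.2 fun k _ => mem_edgeFinset.2 (rung_mem_edgeSet k)
  · exact image_subset_iff.2 fun j _ => mem_edgeFinset.2 (botEdge_mem_edgeSet j)
  · simpa [Finset.disjoint_left] using fun k j => (rung_ne_botEdge k j).symm
  · intro ω hω
    simp only [Finset.disjoint_left, image_subset_iff, mem_image, mem_univ, true_and, true_implies,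
      forall_exists_index, forall_apply_eq_imp_iff, not_exists]
    exact ⟨fun ⟨h, hr⟩ => ⟨hr, botEdge_mem_of_reachable_last
      (fun _ he => mem_edgeFinset.1 (hω he)) hr h⟩,
      fun ⟨hr, hb⟩ => ⟨reachable_last_of_botEdge_mem hb, hr⟩⟩

end Path

end

end Bunkbed

open Bunkbed in
theorem bunkbed_path_difference_general (n : ℕ) (qv : ℝ) :
    prConn (bunkbed (SimpleGraph.pathGraph (n + 1))) (fun _ => 1 - qv)
        ((0 : Fin (n + 1)), false) (Fin.last n, false) -
      prConn (bunkbed (SimpleGraph.pathGraph (n + 1))) (fun _ => 1 - qv)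
        ((0 : Fin (n + 1)), false) (Fin.last n, true) =
      qv ^ (n + 1) * (1 - qv) ^ n := by
  have hsplit (b : Bool) := prEvent_eq_and_add_and_not (H := bunkbed (pathGraph (n + 1)))
    (p := fun _ => 1 - qv) (Q := fun ω => (openGraph ω).Reachable (0, false) (Fin.last n, b))
    (fun ω => ∃ k, rung k ∈ ω)
  rw [prConn, prConn, hsplit, hsplit, prEvent_reachable_last_and_exists_rung,
    prEvent_reachable_last_true_and_not_exists_rung,
    prEvent_reachable_last_false_and_not_exists_rung]
  ring

/-- For the path `Pₙ` with endpoints `0` and `n`, constant edge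
probability `1 - q` on the bunkbed graph gives
`P(u₋ ↔ v₋) - P(u₋ ↔ v₊) = q^(n+1) (1-q)^n`. -/
theorem bunkbed_path_difference (n : ℕ) (qv : ℝ) (hq0 : 0 ≤ qv) (hq1 : qv ≤ 1) :
    prConn (bunkbed (SimpleGraph.pathGraph (n + 1))) (fun _ => 1 - qv)
        ((0 : Fin (n + 1)), false) (Fin.last n, false) -
      prConn (bunkbed (SimpleGraph.pathGraph (n + 1))) (fun _ => 1 - qv)
        ((0 : Fin (n + 1)), false) (Fin.last n, true) =
      qv ^ (n + 1) * (1 - qv) ^ n :=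
  bunkbed_path_difference_general n qv
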